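/- Let M ∈ ℝ^{n×n} satisfy zᵀMz ≥ 0 for all z ∈ ℝⁿ, let q ∈ ℝⁿ, let S ⊆ ℝⁿ be convex, and let F(x) = Mx + q. Suppose x₀ is a solution of VI(S, F), and set c := (M + Mᵀ)x₀ and d := x₀ᵀMx₀. Then the solution set of VI(S, F) equals { x ∈ S : (M + Mᵀ)x = c and yᵀ(Mx + q) ≥ d + qᵀx for all y ∈ S }. -/

import Mathlib

/-!
Put `A := M + Mᵀ`, so that `zᵀAz = 2 zᵀMz` and `A` is symmetric positive semidefinite. If `x`
and `x₀` both solve the VI, testing each inequality at the other point and adding gives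
`zᵀMz ≤ 0` for `z = x - x₀`; hence `zᵀAz = 0`, so `Az = 0`, i.e. `Ax = c`. Conversely `Az = 0`
forces `xᵀMx - x₀ᵀMx₀ = zᵀMz + x₀ᵀAz = 0`. Once `xᵀMx = d`, the inequality
`yᵀ(Mx + q) ≥ d + qᵀx` is just `(y - x)ᵀ(Mx + q) ≥ 0` rewritten.
-/

open Matrix

section QuadraticForm

variable {ι R : Type*} [Fintype ι]

lemma dotProduct_add_transpose_mulVec_self [CommSemiring R] (M : Matrix ι ι R) (z : ι → R) :
    z ⬝ᵥ (M + Mᵀ) *ᵥ z = 2 * (z ⬝ᵥ M *ᵥ z) := by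
  rw [add_mulVec, dotProduct_add, dotProduct_transpose_mulVec, two_mul]

lemma dotProduct_mulVec_self_sub_dotProduct_mulVec_self [CommRing R] (M : Matrix ι ι R)
    (x x₀ : ι → R) :
    x ⬝ᵥ M *ᵥ x - x₀ ⬝ᵥ M *ᵥ x₀ = (x - x₀) ⬝ᵥ M *ᵥ (x - x₀) + x₀ ⬝ᵥ (M + Mᵀ) *ᵥ (x - x₀) := by
  simp only [add_mulVec, mulVec_sub, dotProduct_add, dotProduct_sub, sub_dotProduct,
    dotProduct_transpose_mulVec]
  ring

lemma dotProduct_mulVec_self_eq_of_mulVec_add_transpose_eq [CommRing R] [IsDomain R]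
    [CharZero R] {M : Matrix ι ι R} {x x₀ : ι → R} (h : (M + Mᵀ) *ᵥ x = (M + Mᵀ) *ᵥ x₀) :
    x ⬝ᵥ M *ᵥ x = x₀ ⬝ᵥ M *ᵥ x₀ := by
  have hz : (M + Mᵀ) *ᵥ (x - x₀) = 0 := by rw [mulVec_sub, h, sub_self]
  have hzMz : (x - x₀) ⬝ᵥ M *ᵥ (x - x₀) = 0 := by
    have := dotProduct_add_transpose_mulVec_self M (x - x₀)
    rw [hz, dotProduct_zero, eq_comm, mul_eq_zero] at this
    exact this.resolve_left two_ne_zero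
  rw [← sub_eq_zero, dotProduct_mulVec_self_sub_dotProduct_mulVec_self, hzMz, hz,
    dotProduct_zero, add_zero]

lemma posSemidef_add_transpose {M : Matrix ι ι ℝ} (hM : ∀ z, 0 ≤ z ⬝ᵥ M *ᵥ z) :
    (M + Mᵀ).PosSemidef := by
  refine .of_dotProduct_mulVec_nonneg ?_ fun z ↦ ?_
  · simp [IsHermitian, add_comm]
  · rw [star_trivial, dotProduct_add_transpose_mulVec_self]
    exact mul_nonneg zero_le_two (hM z)

lemma mulVec_add_transpose_eq_zero {M : Matrix ι ι ℝ} (hM : ∀ z, 0 ≤ z ⬝ᵥ M *ᵥ z)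
    {z : ι → ℝ} (hz : z ⬝ᵥ M *ᵥ z = 0) : (M + Mᵀ) *ᵥ z = 0 := by
  rw [← (posSemidef_add_transpose hM).dotProduct_mulVec_zero_iff, star_trivial,
    dotProduct_add_transpose_mulVec_self, hz, mul_zero]

end QuadraticForm

section VariationalInequality

variable {ι : Type*} [Fintype ι]

def IsVISolution (S : Set (ι → ℝ)) (F : (ι → ℝ) → ι → ℝ) (x : ι → ℝ) : Prop :=
  x ∈ S ∧ ∀ y ∈ S, 0 ≤ (y - x) ⬝ᵥ F x

lemma IsVISolution.dotProduct_sub_nonpos {S : Set (ι → ℝ)} {F : (ι → ℝ) → ι → ℝ}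
    {x x₀ : ι → ℝ} (hx : IsVISolution S F x) (hx₀ : IsVISolution S F x₀) :
    (x - x₀) ⬝ᵥ (F x - F x₀) ≤ 0 := by
  have h := hx.2 x₀ hx₀.1
  have h₀ := hx₀.2 x hx.1
  rw [← neg_sub, neg_dotProduct] at h
  rw [dotProduct_sub]
  linarith

lemma IsVISolution.mulVec_add_transpose_eq {S : Set (ι → ℝ)} {M : Matrix ι ι ℝ} {q : ι → ℝ}
    (hM : ∀ z, 0 ≤ z ⬝ᵥ M *ᵥ z) {x x₀ : ι → ℝ}
    (hx : IsVISolution S (fun x ↦ M *ᵥ x + q) x) (hx₀ : IsVISolution S (fun x ↦ M *ᵥ x + q) x₀) :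
    (M + Mᵀ) *ᵥ x = (M + Mᵀ) *ᵥ x₀ := by
  have hz : (x - x₀) ⬝ᵥ M *ᵥ (x - x₀) = 0 := by
    refine le_antisymm ?_ (hM _)
    simpa [mulVec_sub] using hx.dotProduct_sub_nonpos hx₀
  rw [← sub_eq_zero, ← mulVec_sub]
  exact mulVec_add_transpose_eq_zero hM hz

lemma isVISolution_affine_iff {S : Set (ι → ℝ)} {M : Matrix ι ι ℝ} {q x : ι → ℝ} {d : ℝ}
    (hd : x ⬝ᵥ M *ᵥ x = d) :
    IsVISolution S (fun x ↦ M *ᵥ x + q) x ↔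
      x ∈ S ∧ ∀ y ∈ S, d + q ⬝ᵥ x ≤ y ⬝ᵥ (M *ᵥ x + q) := by
  have h : ∀ y, (y - x) ⬝ᵥ (M *ᵥ x + q) = y ⬝ᵥ (M *ᵥ x + q) - (d + q ⬝ᵥ x) := fun y ↦ by
    rw [sub_dotProduct, dotProduct_add, dotProduct_add, hd, dotProduct_comm x q]
  simp only [IsVISolution, h, sub_nonneg]

end VariationalInequality

theorem VI_solution_set_characterization_general (n : ℕ) (M : Matrix (Fin n) (Fin n) ℝ)
    (q : Fin n → ℝ) (S : Set (Fin n → ℝ))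
    (hpsd : ∀ z : Fin n → ℝ, 0 ≤ z ⬝ᵥ M.mulVec z)
    (x₀ : Fin n → ℝ) (hx₀S : x₀ ∈ S)
    (hx₀ : ∀ y ∈ S, 0 ≤ (y - x₀) ⬝ᵥ (M.mulVec x₀ + q))
    (c : Fin n → ℝ) (hc : c = (M + Mᵀ).mulVec x₀)
    (d : ℝ) (hd : d = x₀ ⬝ᵥ M.mulVec x₀) :
    {x : Fin n → ℝ | x ∈ S ∧ ∀ y ∈ S, 0 ≤ (y - x) ⬝ᵥ (M.mulVec x + q)} =
      {x : Fin n → ℝ | x ∈ S ∧ (M + Mᵀ).mulVec x = c ∧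
        ∀ y ∈ S, d + q ⬝ᵥ x ≤ y ⬝ᵥ (M.mulVec x + q)} := by
  subst hc hd
  ext x
  change IsVISolution S (fun x ↦ M *ᵥ x + q) x ↔ _
  constructor
  · intro hx
    have hAx := hx.mulVec_add_transpose_eq hpsd ⟨hx₀S, hx₀⟩
    have hsol := (isVISolution_affine_iff
      (dotProduct_mulVec_self_eq_of_mulVec_add_transpose_eq hAx)).mp hx
    exact ⟨hsol.1, hAx, hsol.2⟩
  · rintro ⟨hxS, hAx, hineq⟩
    exact (isVISolution_affine_iff
      (dotProduct_mulVec_self_eq_of_mulVec_add_transpose_eq hAx)).mpr ⟨hxS, hineq⟩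

/-- For `M` with `zᵀMz ≥ 0`, `S` convex, `F x = M x + q`, and `x₀` a solution
of `VI(S, F)`, the solution set of `VI(S, F)` equals
`{ x ∈ S : (M + Mᵀ)x = c ∧ ∀ y ∈ S, yᵀ(Mx + q) ≥ d + qᵀx }`
where `c = (M + Mᵀ)x₀` and `d = x₀ᵀMx₀`. -/
theorem VI_solution_set_characterization (n : ℕ) (M : Matrix (Fin n) (Fin n) ℝ)
    (q : Fin n → ℝ) (S : Set (Fin n → ℝ)) (hS : Convex ℝ S)
    (hpsd : ∀ z : Fin n → ℝ, 0 ≤ z ⬝ᵥ M.mulVec z)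
    (x₀ : Fin n → ℝ) (hx₀S : x₀ ∈ S)
    (hx₀ : ∀ y ∈ S, 0 ≤ (y - x₀) ⬝ᵥ (M.mulVec x₀ + q))
    (c : Fin n → ℝ) (hc : c = (M + Mᵀ).mulVec x₀)
    (d : ℝ) (hd : d = x₀ ⬝ᵥ M.mulVec x₀) :
    {x : Fin n → ℝ | x ∈ S ∧ ∀ y ∈ S, 0 ≤ (y - x) ⬝ᵥ (M.mulVec x + q)} =
      {x : Fin n → ℝ | x ∈ S ∧ (M + Mᵀ).mulVec x = c ∧
        ∀ y ∈ S, d + q ⬝ᵥ x ≤ y ⬝ᵥ (M.mulVec x + q)} :=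
  VI_solution_set_characterization_general n M q S hpsd x₀ hx₀S hx₀ c hc d hd
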